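/- Let U, V ⊆ ℝ^d be two finite non-empty sets. Then there exists a max-linear function f ∈ L_d with f(x) < 0 for all x ∈ U and f(x) > 0 for all x ∈ V if and only if conv(U) ∩ V = ∅, where conv(U) denotes the convex hull of U. -/

import Mathlib

open Matrix BigOperators

/-- A max-linear (max-affine) function: pointwise maximum of finitely many affine functions. -/
def IsMaxAffine {d : ℕ} (f : (Fin d → ℝ) → ℝ) : Prop :=
  ∃ (P : Finset ((Fin d → ℝ) × ℝ)) (hP : P.Nonempty),
    ∀ x, f x = P.sup' hP fun wb => wb.1 ⬝ᵥ x + wb.2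

/-!
A max-affine function is convex, so if it is negative on `U` it is negative on `conv U`;
this gives necessity. Conversely, each `v ∈ V` lies outside the compact convex set `conv U`,
so Hahn–Banach gives an affine function negative on `U` and positive at `v`; the maximum
of these finitely many affine functions separates `U` from `V`.
-/

theorem ConvexOn.finset_sup' {𝕜 E β ι : Type*} [Semiring 𝕜] [PartialOrder 𝕜] [AddCommMonoid E]
    [LinearOrder β] [AddCommMonoid β] [IsOrderedAddMonoid β] [SMul 𝕜 E] [Module 𝕜 β]
    [PosSMulStrictMono 𝕜 β] {s : Set E} {t : Finset ι} (ht : t.Nonempty) {f : ι → E → β}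
    (hf : ∀ i ∈ t, ConvexOn 𝕜 s (f i)) : ConvexOn 𝕜 s fun x => t.sup' ht fun i => f i x := by
  simp_rw [← Finset.sup'_apply]
  exact Finset.sup'_induction ht f (fun _ hg _ hh => hg.sup hh) hf

theorem ConvexOn.lt_of_mem_convexHull {𝕜 E β : Type*} [Field 𝕜] [LinearOrder 𝕜]
    [IsStrictOrderedRing 𝕜] [AddCommGroup E] [AddCommGroup β] [LinearOrder β]
    [IsOrderedAddMonoid β] [Module 𝕜 E] [Module 𝕜 β] [IsStrictOrderedModule 𝕜 β]
    {s : Set E} {f : E → β} {t : Finset E} {x : E} {c : β} (hf : ConvexOn 𝕜 s f)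
    (hts : ↑t ⊆ s) (hx : x ∈ convexHull 𝕜 (t : Set E)) (ht : ∀ y ∈ t, f y < c) : f x < c :=
  (hf.le_sup_of_mem_convexHull hts hx).trans_lt ((Finset.sup'_lt_iff _).2 ht)

theorem IsMaxAffine.convexOn {d : ℕ} {f : (Fin d → ℝ) → ℝ} (hf : IsMaxAffine f) :
    ConvexOn ℝ Set.univ f := by
  obtain ⟨P, hP, hf⟩ := hf
  refine (ConvexOn.finset_sup' hP fun wb _ => ?_).congr fun x _ => (hf x).symm
  exact ((dotProductEquiv ℝ (Fin d) wb.1).convexOn convex_univ).add_const wb.2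

theorem exists_dotProduct_add_lt_zero_of_notMem_convexHull {ι : Type*} [Fintype ι]
    {U : Finset (ι → ℝ)} {v : ι → ℝ} (hv : v ∉ convexHull ℝ (U : Set (ι → ℝ))) :
    ∃ a : (ι → ℝ) × ℝ, (∀ u ∈ U, a.1 ⬝ᵥ u + a.2 < 0) ∧ 0 < a.1 ⬝ᵥ v + a.2 := by
  classical
  obtain ⟨g, c, hgU, hgv⟩ := geometric_hahn_banach_closed_point (convex_convexHull ℝ _)
    (U.finite_toSet.isCompact_convexHull ℝ).isClosed hv
  set w := (dotProductEquiv ℝ ι).symm g.toLinearMap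
  have hw : ∀ x, w ⬝ᵥ x = g x := fun x =>
    LinearMap.congr_fun ((dotProductEquiv ℝ ι).apply_symm_apply g.toLinearMap) x
  refine ⟨(w, -c), fun u hu => ?_, ?_⟩
  · linarith [hw u, hgU u (subset_convexHull ℝ _ hu)]
  · linarith [hw v]

theorem exists_isMaxAffine_of_forall_exists_affine {d : ℕ} {U V : Finset (Fin d → ℝ)}
    (h : ∀ v ∈ V, ∃ a : (Fin d → ℝ) × ℝ, (∀ u ∈ U, a.1 ⬝ᵥ u + a.2 < 0) ∧ 0 < a.1 ⬝ᵥ v + a.2) :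
    ∃ f, IsMaxAffine f ∧ (∀ x ∈ U, f x < 0) ∧ ∀ x ∈ V, 0 < f x := by
  classical
  choose a haU haV using h
  -- the constant piece `-1` keeps the family nonempty when `V` is empty
  set P := insert (0, -1) (V.attach.image fun v => a v.1 v.2)
  have hP : P.Nonempty := Finset.insert_nonempty _ _
  refine ⟨fun x => P.sup' hP fun wb => wb.1 ⬝ᵥ x + wb.2, ⟨P, hP, fun _ => rfl⟩, ?_, ?_⟩
  · intro u hu
    simp only [Finset.sup'_lt_iff, P, Finset.forall_mem_insert, Finset.forall_mem_image]
    exact ⟨by simp, fun v _ => haU v.1 v.2 u hu⟩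
  · intro v hv
    exact (Finset.lt_sup'_iff _).2 ⟨a v hv, Finset.mem_insert_of_mem
      (Finset.mem_image_of_mem _ (Finset.mem_attach _ ⟨v, hv⟩)), haV v hv⟩

theorem maxLin_separable_iff_general {d : ℕ} (U V : Finset (Fin d → ℝ)) :
    (∃ f, IsMaxAffine f ∧ (∀ x ∈ U, f x < 0) ∧ ∀ x ∈ V, 0 < f x) ↔
      convexHull ℝ (U : Set (Fin d → ℝ)) ∩ (V : Set (Fin d → ℝ)) = ∅ := by
  constructor
  · rintro ⟨f, hf, hfU, hfV⟩
    refine Set.eq_empty_iff_forall_notMem.2 fun x ⟨hxU, hxV⟩ => ?_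
    exact (hfV x hxV).not_gt
      (hf.convexOn.lt_of_mem_convexHull (Set.subset_univ _) hxU hfU)
  · intro hUV
    refine exists_isMaxAffine_of_forall_exists_affine fun v hv => ?_
    exact exists_dotProduct_add_lt_zero_of_notMem_convexHull fun hvU =>
      hUV.subset ⟨hvU, hv⟩

/-- `U` is max-lin separable from `V` iff `conv(U) ∩ V = ∅`. -/
theorem maxLin_separable_iff {d : ℕ} (U V : Finset (Fin d → ℝ))
    (hU : U.Nonempty) (hV : V.Nonempty) :
    (∃ f, IsMaxAffine f ∧ (∀ x ∈ U, f x < 0) ∧ ∀ x ∈ V, 0 < f x) ↔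
      convexHull ℝ (U : Set (Fin d → ℝ)) ∩ (V : Set (Fin d → ℝ)) = ∅ :=
  maxLin_separable_iff_general U V
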